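/- Let n ≥ 1 and let D_n be the (n+1)×(n+1) real matrix indexed by k,j ∈ {0,…,n} with entries [D_n]_{kj} = 2j/σ_k if j > k and j+k is odd, and 0 otherwise, where σ_0 = 2 and σ_k = 1 for k ≥ 1. Then the maximum over rows k of the sum ∑_j |[D_n]_{kj}| equals n(n+2)/2 if n is even and (n+1)²/2 − 2 if n is odd. -/

import Mathlib

/-!
For `k ≥ 1` the `k`-th row sum is `∑ 2j` over the `m = ⌊(n + 1 - k) / 2⌋` indices
`j = k + 1, k + 3, …, k + 2m - 1`, i.e. `2m(k + m)`. This is maximal at `k = 1` when `n` is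
even; when `n` is odd, rows `1` and `2` have the same number of terms, and `k = 2` wins.
-/

open Finset

def chebRowSum (n k : ℕ) : ℕ :=
  ∑ j ∈ range (n + 1), if k < j ∧ Odd (j + k) then 2 * j else 0

theorem chebRowSum_eq (n k : ℕ) :
    chebRowSum n k = 2 * ((n + 1 - k) / 2) * (k + (n + 1 - k) / 2) := by
  induction n with
  | zero => simp [chebRowSum]
  | succ n ih =>
    rw [chebRowSum, sum_range_succ, ← chebRowSum, ih]
    split_ifs with h <;> rw [Nat.odd_iff] at h
    · obtain ⟨m, hm, hm'⟩ : ∃ m, (n + 1 - k) / 2 = m ∧ (n + 1 + 1 - k) / 2 = m + 1 :=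
        ⟨_, rfl, by omega⟩
      have hn : n + 1 = k + 2 * m + 1 := by omega
      rw [hm, hm', hn]
      ring
    · rw [show (n + 1 + 1 - k) / 2 = (n + 1 - k) / 2 by omega, add_zero]

theorem two_mul_chebRowSum_le_of_even {n k : ℕ} (hn : Even n) (hk : 1 ≤ k) :
    2 * chebRowSum n k ≤ n * (n + 2) := by
  obtain ⟨t, rfl⟩ := hn
  rw [chebRowSum_eq]
  obtain ⟨m, hm⟩ : ∃ m, (t + t + 1 - k) / 2 = m := ⟨_, rfl⟩
  rw [hm]
  rcases Nat.eq_zero_or_pos m with rfl | hm0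
  · simp
  have hmt : m ≤ t := by omega
  have hkm : k + 2 * m ≤ 2 * t + 1 := by omega
  nlinarith

theorem two_mul_chebRowSum_one_of_even {n : ℕ} (hn : Even n) :
    2 * chebRowSum n 1 = n * (n + 2) := by
  obtain ⟨t, rfl⟩ := hn
  rw [chebRowSum_eq, show (t + t + 1 - 1) / 2 = t by omega]
  ring

theorem two_mul_chebRowSum_add_four_le_of_odd {n k : ℕ} (hn : Odd n) (hk : 1 ≤ k) :
    2 * chebRowSum n k + 4 ≤ (n + 1) ^ 2 := by
  obtain ⟨t, rfl⟩ := hn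
  rw [chebRowSum_eq]
  obtain ⟨m, hm⟩ : ∃ m, (2 * t + 1 + 1 - k) / 2 = m := ⟨_, rfl⟩
  rw [hm]
  rcases Nat.eq_zero_or_pos m with rfl | hm0
  · nlinarith [Nat.zero_le t]
  have hmt : m ≤ t := by omega
  have hkm : k + 2 * m ≤ 2 * t + 2 := by omega
  nlinarith

theorem two_mul_chebRowSum_min_add_four_of_odd {n : ℕ} (hn : Odd n) :
    2 * chebRowSum n (min 2 n) + 4 = (n + 1) ^ 2 := by
  obtain ⟨t, rfl⟩ := hn
  rcases t with _ | t
  · decide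
  · rw [chebRowSum_eq, show min 2 (2 * (t + 1) + 1) = 2 by omega,
      show (2 * (t + 1) + 1 + 1 - 2) / 2 = t + 1 by omega]
    ring

theorem sum_abs_row_eq_chebRowSum {n : ℕ} {D : Matrix (Fin (n + 1)) (Fin (n + 1)) ℝ}
    (hD : ∀ k j : Fin (n + 1), D k j =
      if (k : ℕ) < (j : ℕ) ∧ Odd ((j : ℕ) + (k : ℕ)) then
        2 * (j : ℕ) / (if (k : ℕ) = 0 then 2 else 1) else 0)
    {k : Fin (n + 1)} (hk : 1 ≤ (k : ℕ)) :
    ∑ j, |D k j| = chebRowSum n k := by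
  rw [chebRowSum, ← Fin.sum_univ_eq_sum_range, Nat.cast_sum]
  refine sum_congr rfl fun j _ => ?_
  -- the division in `hD` is in `ℕ`, before the cast
  rw [hD, if_neg (show (k : ℕ) ≠ 0 by omega), Nat.div_one]
  exact abs_of_nonneg (Nat.cast_nonneg _)

theorem chebyshev_diff_matrix_max_row_sum (n : ℕ) (hn : 1 ≤ n)
    (D : Matrix (Fin (n + 1)) (Fin (n + 1)) ℝ)
    (hD : ∀ k j : Fin (n + 1), D k j =
      if (k : ℕ) < (j : ℕ) ∧ Odd ((j : ℕ) + (k : ℕ)) then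
        2 * (j : ℕ) / (if (k : ℕ) = 0 then 2 else 1) else 0) :
    IsGreatest {s : ℝ | ∃ k : Fin (n + 1), 1 ≤ (k : ℕ) ∧ s = ∑ j, |D k j|}
      (if Even n then (n : ℝ) * (n + 2) / 2 else ((n : ℝ) + 1) ^ 2 / 2 - 2) := by
  rcases Nat.even_or_odd n with hev | hodd
  · rw [if_pos hev]
    refine ⟨⟨⟨1, by omega⟩, le_rfl, ?_⟩, ?_⟩
    · have h : (2 * chebRowSum n 1 : ℝ) = n * (n + 2) := by
        exact_mod_cast two_mul_chebRowSum_one_of_even hev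
      rw [sum_abs_row_eq_chebRowSum hD le_rfl, Fin.val_mk]
      linarith
    · rintro s ⟨k, hk, rfl⟩
      have h : (2 * chebRowSum n k : ℝ) ≤ n * (n + 2) := by
        exact_mod_cast two_mul_chebRowSum_le_of_even hev hk
      rw [sum_abs_row_eq_chebRowSum hD hk]
      linarith
  · rw [if_neg (Nat.not_even_iff_odd.mpr hodd)]
    -- `min 2 n` is the row `k = 2`, except for `n = 1`, where only `k = 1` exists
    refine ⟨⟨⟨min 2 n, by omega⟩, by simp [hn], ?_⟩, ?_⟩
    · have h : (2 * chebRowSum n (min 2 n) + 4 : ℝ) = (n + 1) ^ 2 := by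
        exact_mod_cast two_mul_chebRowSum_min_add_four_of_odd hodd
      rw [sum_abs_row_eq_chebRowSum hD (by simp [hn])]
      linarith
    · rintro s ⟨k, hk, rfl⟩
      have h : (2 * chebRowSum n k + 4 : ℝ) ≤ (n + 1) ^ 2 := by
        exact_mod_cast two_mul_chebRowSum_add_four_le_of_odd hodd hk
      rw [sum_abs_row_eq_chebRowSum hD hk]
      linarith
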